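/- arXiv:2003.00436 — 5 statements merged into one kernel-verified Lean document; each statement's English description precedes it below -/
import Mathlib

section
/- Let f : ℝ^d → ℝ^ℓ be a locally bounded measurable function and let N_f be the (Lebesgue-null) complement of its set of points of approximate continuity. Then for every x̄ ∈ ℝ^d, every δ > 0 and every Lebesgue-null set N ⊆ ℝ^d, one has f(B_δ(x̄) \ N_f) ⊆ closure( f(B_δ(x̄) \ (N_f ∪ N)) ), and consequently clco f(B_δ(x̄) \ N_f) = clco f(B_δ(x̄) \ (N_f ∪ N)). -/
open MeasureTheory Metric Filter Set Topology

noncomputable section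

/-- `ℝ^n` with the Euclidean structure. -/
abbrev Euc (n : ℕ) : Type := EuclideanSpace ℝ (Fin n)

/-- Closed convex hull of a set. -/
def clco {n : ℕ} (A : Set (Euc n)) : Set (Euc n) := closure (convexHull ℝ A)

/-- A function is locally bounded. -/
def LocBdd {d l : ℕ} (f : Euc d → Euc l) : Prop :=
  ∀ x : Euc d, ∃ δ > (0 : ℝ), ∃ C : ℝ, ∀ y ∈ Metric.ball x δ, ‖f y‖ ≤ C

/-- The Filippov regularization of `f`. -/
def FilippovReg {d l : ℕ} (f : Euc d → Euc l) (x : Euc d) : Set (Euc l) :=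
  ⋂ (N : Set (Euc d)) (_ : volume N = 0) (δ : ℝ) (_ : 0 < δ),
    clco (f '' (Metric.ball x δ \ N))

/-- The Krasovskii regularization of `f`. -/
def KrasovskiiReg {d l : ℕ} (f : Euc d → Euc l) (x : Euc d) : Set (Euc l) :=
  ⋂ (δ : ℝ) (_ : 0 < δ), clco (f '' Metric.ball x δ)

/-- A set-valued map is cusco: upper semicontinuous with nonempty compact convex values. -/
def IsCusco {d l : ℕ} (Φ : Euc d → Set (Euc l)) : Prop :=
  (∀ x : Euc d, ∀ U : Set (Euc l), IsOpen U → Φ x ⊆ U →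
      ∃ δ > (0 : ℝ), ∀ y ∈ Metric.ball x δ, Φ y ⊆ U) ∧
  ∀ x : Euc d, (Φ x).Nonempty ∧ IsCompact (Φ x) ∧ Convex ℝ (Φ x)

/-- The "minimal" map `m(Φ)` associated to a set-valued map `Φ`. -/
def mPhi {d l : ℕ} (Φ : Euc d → Set (Euc l)) (x : Euc d) : Set (Euc l) :=
  ⋂ (N : Set (Euc d)) (_ : volume N = 0) (δ : ℝ) (_ : 0 < δ),
    clco (⋃ a ∈ Metric.ball x δ \ N, Φ a)

/-- A point of approximate continuity of `f`. -/
def ApproxContAt {d l : ℕ} (f : Euc d → Euc l) (x : Euc d) : Prop :=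
  ∀ ε > (0 : ℝ),
    Tendsto (fun δ : ℝ =>
        volume {y ∈ Metric.ball x δ | ε ≤ ‖f y - f x‖} / volume (Metric.ball x δ))
      (𝓝[>] 0) (𝓝 0)

/-- A cusco map is Filippov representable if it is the Filippov regularization
of some locally bounded measurable function. -/
def FilippovRepresentable {d l : ℕ} (Φ : Euc d → Set (Euc l)) : Prop :=
  ∃ f : Euc d → Euc l, Measurable f ∧ LocBdd f ∧ ∀ x, Φ x = FilippovReg f x

/-!
Approximate continuity at `x` says that the points of a small ball around `x` where `f` is
`ε`-far from `f x` fill a vanishing proportion of the ball, so they cannot cover the ball up to a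
null set: `f x` is a limit of values of `f` taken off any null set. Almost every point is a point
of approximate continuity (Lebesgue's density theorem, applied to the preimages of a countable
basis of open sets), so `N_f ∪ N` is null and the inclusion follows; a closed convex hull does not
change when its set is enlarged inside its closure.
-/

lemma MeasureTheory.Measure.addHaar_closedBall_eq_addHaar_ball_of_ne_zero {E : Type*}
    [NormedAddCommGroup E] [NormedSpace ℝ E] [MeasurableSpace E] [BorelSpace E]
    [FiniteDimensional ℝ E]
    (μ : Measure E) [μ.IsAddHaarMeasure] (x : E) {r : ℝ} (hr : r ≠ 0) :
    μ (closedBall x r) = μ (ball x r) := by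
  refine le_antisymm ?_ (measure_mono ball_subset_closedBall)
  calc μ (closedBall x r) = μ (ball x r ∪ sphere x r) := by rw [ball_union_sphere]
    _ ≤ μ (ball x r) + μ (sphere x r) := measure_union_le _ _
    _ = μ (ball x r) := by rw [Measure.addHaar_sphere_of_ne_zero μ x hr, add_zero]

theorem ae_approxContAt {d l : ℕ} {f : Euc d → Euc l} (hf : Measurable f) :
    ∀ᵐ x, ApproxContAt f x := by
  set 𝓑 := TopologicalSpace.countableBasis (Euc l)
  have hdensity : ∀ᵐ x, ∀ B ∈ 𝓑, Tendsto
      (fun r => volume ((f ⁻¹' B)ᶜ ∩ closedBall x r) / volume (closedBall x r))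
      (𝓝[>] 0) (𝓝 ((f ⁻¹' B)ᶜ.indicator 1 x)) :=
    (ae_ball_iff (TopologicalSpace.countable_countableBasis _)).2 fun B hB =>
      Besicovitch.ae_tendsto_measure_inter_div_of_measurableSet volume
        (hf (TopologicalSpace.isOpen_of_mem_countableBasis hB).measurableSet).compl
  filter_upwards [hdensity] with x hx ε hε
  obtain ⟨B, hB, hfxB, hBε⟩ :=
    (TopologicalSpace.isBasis_countableBasis _).exists_subset_of_mem_open
      (mem_ball_self hε : f x ∈ ball (f x) ε) isOpen_ball
  have hlim := hx B hB
  rw [indicator_of_notMem (not_not.2 hfxB)] at hlim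
  refine tendsto_of_tendsto_of_tendsto_of_le_of_le' tendsto_const_nhds hlim
    (Eventually.of_forall fun _ => zero_le) ?_
  filter_upwards [self_mem_nhdsWithin] with r (hr : 0 < r)
  rw [Measure.addHaar_closedBall_eq_addHaar_ball_of_ne_zero volume x hr.ne']
  gcongr
  rintro y ⟨hy, hfar⟩
  exact ⟨fun hyB => hfar.not_gt (mem_ball_iff_norm.1 (hBε hyB)), ball_subset_closedBall hy⟩

lemma ApproxContAt.exists_mem_ball_diff_norm_sub_lt {d l : ℕ} {f : Euc d → Euc l} {x : Euc d}
    (hf : ApproxContAt f x) {ε r : ℝ} (hε : 0 < ε) (hr : 0 < r) {N : Set (Euc d)}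
    (hN : volume N = 0) : ∃ y ∈ ball x r \ N, ‖f y - f x‖ < ε := by
  obtain ⟨ρ, hratio, hρ, hρr⟩ :=
    (((hf ε hε).eventually_lt_const one_pos).and (Ioo_mem_nhdsGT hr)).exists
  have hfar_small : volume {y ∈ ball x ρ | ε ≤ ‖f y - f x‖} < volume (ball x ρ) := by
    rwa [ENNReal.div_lt_iff (Or.inl (measure_ball_pos volume x hρ).ne')
      (Or.inl (measure_ball_lt_top (μ := volume)).ne), one_mul] at hratio
  by_contra! hfar
  have hcover : ball x ρ ⊆ {y ∈ ball x ρ | ε ≤ ‖f y - f x‖} ∪ N := fun y hy =>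
    or_iff_not_imp_right.2 fun hyN => ⟨hy, hfar y ⟨ball_subset_ball hρr.le hy, hyN⟩⟩
  refine ((measure_mono (μ := volume) hcover).trans (measure_union_le _ _)).not_gt ?_
  rwa [hN, add_zero]

lemma ApproxContAt.mem_closure_image_diff {d l : ℕ} {f : Euc d → Euc l} {x : Euc d}
    (hf : ApproxContAt f x) {U N : Set (Euc d)} (hU : IsOpen U) (hx : x ∈ U)
    (hN : volume N = 0) : f x ∈ closure (f '' (U \ N)) := by
  obtain ⟨r, hr, hrU⟩ := Metric.isOpen_iff.1 hU x hx
  refine Metric.mem_closure_iff.2 fun ε hε => ?_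
  obtain ⟨y, ⟨hy, hyN⟩, hfy⟩ := hf.exists_mem_ball_diff_norm_sub_lt hε hr hN
  exact ⟨f y, mem_image_of_mem f ⟨hrU hy, hyN⟩, by rwa [dist_comm, dist_eq_norm]⟩

lemma clco_eq_of_subset_of_subset_closure {n : ℕ} {A B : Set (Euc n)} (hBA : B ⊆ A)
    (hAB : A ⊆ closure B) : clco A = clco B := by
  refine (closure_minimal (convexHull_min ?_ (convex_convexHull ℝ B).closure)
    isClosed_closure).antisymm (closure_mono (convexHull_mono hBA))
  exact hAB.trans (closure_mono (subset_convexHull ℝ B))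

theorem filippov_lemma1_images_general (d l : ℕ) (f : Euc d → Euc l)
    (hmeas : Measurable f)
    (Nf : Set (Euc d)) (hNf : Nf = {x : Euc d | ¬ ApproxContAt f x})
    (xbar : Euc d) (δ : ℝ) (N : Set (Euc d)) (hN : volume N = 0) :
    f '' (Metric.ball xbar δ \ Nf) ⊆ closure (f '' (Metric.ball xbar δ \ (Nf ∪ N))) ∧
    clco (f '' (Metric.ball xbar δ \ Nf)) = clco (f '' (Metric.ball xbar δ \ (Nf ∪ N))) := by
  have hNf_null : volume Nf = 0 := hNf ▸ ae_approxContAt hmeas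
  have hsub : f '' (ball xbar δ \ Nf) ⊆ closure (f '' (ball xbar δ \ (Nf ∪ N))) := by
    rintro _ ⟨x, ⟨hx, hxNf⟩, rfl⟩
    have hfx : ApproxContAt f x := by simpa [hNf] using hxNf
    exact hfx.mem_closure_image_diff isOpen_ball hx (measure_union_null hNf_null hN)
  exact ⟨hsub, clco_eq_of_subset_of_subset_closure
    (image_mono (sdiff_subset_sdiff_right subset_union_left)) hsub⟩

/-- Lemma 1, first part: for a locally bounded measurable `f`, with `N_f` the
(null) complement of its points of approximate continuity, images of balls minus `N_f` are
contained in the closure of images of balls minus `N_f ∪ N`, and the closed convex hulls agree. -/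
theorem filippov_lemma1_images (d l : ℕ) (f : Euc d → Euc l)
    (hmeas : Measurable f) (hbdd : LocBdd f)
    (Nf : Set (Euc d)) (hNf : Nf = {x : Euc d | ¬ ApproxContAt f x})
    (xbar : Euc d) (δ : ℝ) (hδ : 0 < δ) (N : Set (Euc d)) (hN : volume N = 0) :
    f '' (Metric.ball xbar δ \ Nf) ⊆ closure (f '' (Metric.ball xbar δ \ (Nf ∪ N))) ∧
    clco (f '' (Metric.ball xbar δ \ Nf)) = clco (f '' (Metric.ball xbar δ \ (Nf ∪ N))) :=
  filippov_lemma1_images_general d l f hmeas Nf hNf xbar δ N hN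
end
end

section
/- Let Φ : ℝ^d ⇒ ℝ^ℓ be a cusco map. Then there exists a Lebesgue-null set N_Φ ⊆ ℝ^d such that for every x̄ ∈ ℝ^d, every δ > 0 and every Lebesgue-null set N ⊆ ℝ^d: (a) Φ(B_δ(x̄) \ N_Φ) ⊆ closure( Φ(B_δ(x̄) \ (N_Φ ∪ N)) ); (b) clco Φ(B_δ(x̄) \ N_Φ) = clco Φ(B_δ(x̄) \ (N_Φ ∪ N)); and (c) clco Φ(B_δ(x̄) \ N_Φ) = ⋂_{N Lebesgue-null} clco Φ(B_δ(x̄) \ N). -/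
open MeasureTheory Metric Filter Set Topology

noncomputable section

/-!
Fix a countable basis of `ℝ^ℓ`. For a basic open set `V`, let `S_V` be the set of points `x` with
`Φ x ∩ V ≠ ∅`. The points of `S_V` outside the support of `volume.restrict S_V` form a null set,
since the complement of the support of a measure is null in a hereditarily Lindelöf space; let
`N_Φ` be the union of these countably many null sets. If `x ∉ N_Φ` and `z ∈ Φ x ∩ V`, then every
neighbourhood of `x` meets `S_V` in positive measure, so it contains a point `y ∈ S_V` outside any
given null set, and `Φ y` meets `V`. This proves (a) with any open set in place of the ball;
(b) and (c) follow formally.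
-/

open TopologicalSpace

section ClosedConvexHull

variable {𝕜 E : Type*} [Field 𝕜] [PartialOrder 𝕜] [AddCommGroup E] [Module 𝕜 E]
  [TopologicalSpace E] [IsTopologicalAddGroup E] [ContinuousConstSMul 𝕜 E]

theorem closure_convexHull_eq_of_subset_of_subset_closure {s t : Set E} (hts : t ⊆ s)
    (hst : s ⊆ closure t) : closure (convexHull 𝕜 s) = closure (convexHull 𝕜 t) := by
  refine subset_antisymm ?_ (closure_mono (convexHull_mono hts))
  refine closure_minimal (convexHull_min ?_ (convex_convexHull 𝕜 t).closure) isClosed_closure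
  exact hst.trans (closure_mono (subset_convexHull 𝕜 t))

end ClosedConvexHull

namespace MeasureTheory.Measure

variable {X : Type*} [TopologicalSpace X] [MeasurableSpace X] {μ : Measure X}

theorem measure_sdiff_support_restrict [HereditarilyLindelofSpace X] (s : Set X) :
    μ (s \ (μ.restrict s).support) = 0 := by
  rw [sdiff_eq, inter_comm]
  exact nonpos_iff_eq_zero.1 ((le_restrict_apply s _).trans_eq measure_compl_support)

theorem nonempty_inter_sdiff_of_mem_support_restrict [OpensMeasurableSpace X] {s u N : Set X}
    {x : X} (hx : x ∈ (μ.restrict s).support) (hu : u ∈ 𝓝 x) (hN : μ N = 0) :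
    ((s ∩ u) \ N).Nonempty := by
  obtain ⟨v, hv_pos, hv_sub⟩ := (mem_support_restrict.1 hx).and_eventually
    (eventually_smallSets_subset.2 (inter_mem_nhdsWithin s hu)) |>.exists
  refine nonempty_of_measure_ne_zero (μ := μ) ?_
  rw [measure_sdiff_null hN]
  exact (hv_pos.trans_le (measure_mono hv_sub)).ne'

end MeasureTheory.Measure

section ExceptionalSet

variable {X Y : Type*} [TopologicalSpace X] [MeasurableSpace X] [TopologicalSpace Y]
  [SecondCountableTopology Y]

def exceptionalSet (μ : Measure X) (Φ : X → Set Y) : Set X :=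
  ⋃ V ∈ countableBasis Y,
    {x | (Φ x ∩ V).Nonempty} \ (μ.restrict {x | (Φ x ∩ V).Nonempty}).support

theorem measure_exceptionalSet [HereditarilyLindelofSpace X] (μ : Measure X)
    (Φ : X → Set Y) : μ (exceptionalSet μ Φ) = 0 :=
  (measure_biUnion_null_iff (countable_countableBasis Y)).2 fun _ _ =>
    Measure.measure_sdiff_support_restrict _

theorem biUnion_sdiff_exceptionalSet_subset_closure [HereditarilyLindelofSpace X]
    [OpensMeasurableSpace X] {μ : Measure X} (Φ : X → Set Y) {U N : Set X} (hU : IsOpen U) (hN : μ N = 0) :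
    ⋃ a ∈ U \ exceptionalSet μ Φ, Φ a ⊆
      closure (⋃ a ∈ U \ (exceptionalSet μ Φ ∪ N), Φ a) := by
  refine iUnion₂_subset fun x ⟨hxU, hxE⟩ z hz => _root_.mem_closure_iff.2 fun O hO hzO => ?_
  obtain ⟨V, hV, hzV, hVO⟩ := (isBasis_countableBasis Y).exists_subset_of_mem_open hzO hO
  have hx_supp : x ∈ (μ.restrict {x | (Φ x ∩ V).Nonempty}).support := by
    by_contra h
    exact hxE (mem_biUnion hV ⟨⟨z, hz, hzV⟩, h⟩)
  have hEN : μ (exceptionalSet μ Φ ∪ N) = 0 :=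
    measure_union_null (measure_exceptionalSet μ Φ) hN
  obtain ⟨y, ⟨⟨w, hwΦ, hwV⟩, hyU⟩, hyEN⟩ :=
    Measure.nonempty_inter_sdiff_of_mem_support_restrict hx_supp (hU.mem_nhds hxU) hEN
  exact ⟨w, hVO hwV, mem_biUnion ⟨hyU, hyEN⟩ hwΦ⟩

end ExceptionalSet

theorem cusco_null_set_images_general (d l : ℕ) (Φ : Euc d → Set (Euc l)) :
    ∃ NΦ : Set (Euc d), volume NΦ = 0 ∧
      (∀ (xbar : Euc d) (δ : ℝ), 0 < δ → ∀ N : Set (Euc d), volume N = 0 →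
        (⋃ a ∈ Metric.ball xbar δ \ NΦ, Φ a) ⊆
            closure (⋃ a ∈ Metric.ball xbar δ \ (NΦ ∪ N), Φ a) ∧
        clco (⋃ a ∈ Metric.ball xbar δ \ NΦ, Φ a) =
            clco (⋃ a ∈ Metric.ball xbar δ \ (NΦ ∪ N), Φ a)) ∧
      (∀ (xbar : Euc d) (δ : ℝ), 0 < δ →
        clco (⋃ a ∈ Metric.ball xbar δ \ NΦ, Φ a) =
          ⋂ (N : Set (Euc d)) (_ : volume N = 0),
            clco (⋃ a ∈ Metric.ball xbar δ \ N, Φ a)) := by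
  set NΦ := exceptionalSet volume Φ
  have h_null : volume NΦ = 0 := measure_exceptionalSet volume Φ
  have h_a : ∀ (xbar : Euc d) (δ : ℝ) (N : Set (Euc d)), volume N = 0 →
      (⋃ a ∈ Metric.ball xbar δ \ NΦ, Φ a) ⊆
        closure (⋃ a ∈ Metric.ball xbar δ \ (NΦ ∪ N), Φ a) := fun _ _ _ hN =>
    biUnion_sdiff_exceptionalSet_subset_closure Φ isOpen_ball hN
  have h_b : ∀ (xbar : Euc d) (δ : ℝ) (N : Set (Euc d)), volume N = 0 →
      clco (⋃ a ∈ Metric.ball xbar δ \ NΦ, Φ a) =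
        clco (⋃ a ∈ Metric.ball xbar δ \ (NΦ ∪ N), Φ a) := fun xbar δ N hN =>
    closure_convexHull_eq_of_subset_of_subset_closure
      (biUnion_mono (sdiff_subset_sdiff_right subset_union_left) fun _ _ => subset_rfl)
      (h_a xbar δ N hN)
  refine ⟨NΦ, h_null, fun xbar δ _ N hN => ⟨h_a xbar δ N hN, h_b xbar δ N hN⟩,
    fun xbar δ _ => subset_antisymm (subset_iInter₂ fun N hN => ?_) (iInter₂_subset NΦ h_null)⟩
  rw [h_b xbar δ N hN]
  exact closure_mono (convexHull_mono
    (biUnion_mono (sdiff_subset_sdiff_right subset_union_right) fun _ _ => subset_rfl))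

/-- Corollary for cusco maps: for every cusco map `Φ` there is a Lebesgue-null
set `N_Φ` such that for all `xbar`, `δ > 0` and null `N`, (a) the image of the punctured ball is
contained in the closure of the image avoiding also `N`, (b) closed convex hulls agree, and
(c) the closed convex hull equals the intersection over all null sets. -/
theorem cusco_null_set_images (d l : ℕ) (Φ : Euc d → Set (Euc l)) (hΦ : IsCusco Φ) :
    ∃ NΦ : Set (Euc d), volume NΦ = 0 ∧
      (∀ (xbar : Euc d) (δ : ℝ), 0 < δ → ∀ N : Set (Euc d), volume N = 0 →
        (⋃ a ∈ Metric.ball xbar δ \ NΦ, Φ a) ⊆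
            closure (⋃ a ∈ Metric.ball xbar δ \ (NΦ ∪ N), Φ a) ∧
        clco (⋃ a ∈ Metric.ball xbar δ \ NΦ, Φ a) =
            clco (⋃ a ∈ Metric.ball xbar δ \ (NΦ ∪ N), Φ a)) ∧
      (∀ (xbar : Euc d) (δ : ℝ), 0 < δ →
        clco (⋃ a ∈ Metric.ball xbar δ \ NΦ, Φ a) =
          ⋂ (N : Set (Euc d)) (_ : volume N = 0),
            clco (⋃ a ∈ Metric.ball xbar δ \ N, Φ a)) :=
  cusco_null_set_images_general d l Φ
end
end

section
/- Let f : ℝ^d → ℝ^ℓ be a measurable and locally bounded function. Then there exists a Lebesgue-null set N_f ⊆ ℝ^d such that F_f(x) = ⋂_{δ>0} clco f(B_δ(x) \ N_f) for all x ∈ ℝ^d, and moreover f(x) ∈ F_f(x) for Lebesgue-almost all x ∈ ℝ^d. -/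
open MeasureTheory Metric Filter Set Topology

noncomputable section

/-!
Only null sets of the form `U ∩ f⁻¹' V`, with `U`, `V` taken from countable bases, matter: their
union `N_f` is null, and off `N_f` every value `f z` is a limit of values of `f` taken on
`U \ N` for any neighbourhood `U` of `z` and any null set `N`. Hence removing an arbitrary null
set `N` instead of `N_f` does not shrink the closed convex hulls, and `f x ∈ F_f(x)` off `N_f`.
-/

open TopologicalSpace

section InessentialSet

variable {X Y : Type*} [TopologicalSpace X] [SecondCountableTopology X]
  [TopologicalSpace Y] [SecondCountableTopology Y] [MeasurableSpace X]

def inessentialSet (μ : Measure X) (f : X → Y) : Set X :=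
  ⋃ U ∈ countableBasis X, ⋃ V ∈ countableBasis Y, ⋃ (_ : μ (U ∩ f ⁻¹' V) = 0), U ∩ f ⁻¹' V

theorem measure_inessentialSet (μ : Measure X) (f : X → Y) : μ (inessentialSet μ f) = 0 := by
  simp only [inessentialSet, measure_biUnion_null_iff (countable_countableBasis _),
    measure_iUnion_null_iff]
  exact fun _ _ _ _ h => h

variable {μ : Measure X} {f : X → Y}

theorem apply_mem_closure_image_diff {x : X} {U N : Set X}
    (hx : x ∉ inessentialSet μ f) (hU : U ∈ 𝓝 x) (hN : μ N = 0) :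
    f x ∈ closure (f '' (U \ N)) := by
  refine _root_.mem_closure_iff.2 fun o ho hfo => ?_
  obtain ⟨V, hV, hfV, hVo⟩ := (isBasis_countableBasis Y).exists_subset_of_mem_open hfo ho
  obtain ⟨U', hU', hxU', hU'U⟩ := (isBasis_countableBasis X).mem_nhds_iff.1 hU
  have hpos : μ (U' ∩ f ⁻¹' V) ≠ 0 := fun h0 =>
    hx (mem_biUnion hU' (mem_biUnion hV (mem_iUnion_of_mem h0 ⟨hxU', hfV⟩)))
  obtain ⟨z, ⟨hzU', hzV⟩, hzN⟩ :=
    sdiff_nonempty.2 fun hsub => hpos (measure_mono_null hsub hN)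
  exact ⟨f z, hVo hzV, mem_image_of_mem f ⟨hU'U hzU', hzN⟩⟩

theorem image_diff_inessentialSet_subset_closure {U N : Set X} (hU : IsOpen U) (hN : μ N = 0) :
    f '' (U \ inessentialSet μ f) ⊆ closure (f '' (U \ N)) := by
  rintro _ ⟨z, ⟨hzU, hz⟩, rfl⟩
  exact apply_mem_closure_image_diff hz (hU.mem_nhds hzU) hN

end InessentialSet

theorem closure_subset_clco {n : ℕ} (A : Set (Euc n)) : closure A ⊆ clco A :=
  closure_mono (subset_convexHull ℝ A)

theorem clco_subset_clco_of_subset_closure {n : ℕ} {A B : Set (Euc n)} (h : A ⊆ closure B) :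
    clco A ⊆ clco B :=
  closure_minimal
    (convexHull_min (h.trans (closure_subset_clco B)) (convex_convexHull ℝ B).closure)
    isClosed_closure

theorem filippovReg_single_null_set_general (d l : ℕ) (f : Euc d → Euc l) :
    ∃ Nf : Set (Euc d), volume Nf = 0 ∧
      (∀ x : Euc d, FilippovReg f x =
        ⋂ (δ : ℝ) (_ : 0 < δ), clco (f '' (Metric.ball x δ \ Nf))) ∧
      (∀ᵐ x : Euc d, f x ∈ FilippovReg f x) := by
  have hNf := measure_inessentialSet volume f
  refine ⟨inessentialSet volume f, hNf, fun x => ?_, ?_⟩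
  · refine Subset.antisymm (iInter₂_subset (inessentialSet volume f) hNf) ?_
    simp only [FilippovReg, subset_iInter_iff]
    intro N hN δ hδ
    exact (iInter₂_subset δ hδ).trans (clco_subset_clco_of_subset_closure
      (image_diff_inessentialSet_subset_closure isOpen_ball hN))
  · filter_upwards [measure_eq_zero_iff_ae_notMem.1 hNf] with x hx
    simp only [FilippovReg, mem_iInter]
    intro N hN δ hδ
    exact closure_subset_clco _ (apply_mem_closure_image_diff hx (ball_mem_nhds x hδ) hN)

/-- Proposition (i): there is a null set `N_f` realizing the Filippov
regularization of `f`, and `f(x) ∈ F_f(x)` for almost all `x`. -/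
theorem filippovReg_single_null_set (d l : ℕ) (f : Euc d → Euc l)
    (hmeas : Measurable f) (hbdd : LocBdd f) :
    ∃ Nf : Set (Euc d), volume Nf = 0 ∧
      (∀ x : Euc d, FilippovReg f x =
        ⋂ (δ : ℝ) (_ : 0 < δ), clco (f '' (Metric.ball x δ \ Nf))) ∧
      (∀ᵐ x : Euc d, f x ∈ FilippovReg f x) :=
  filippovReg_single_null_set_general d l f
end
end

section
/- Let f : ℝ^d → ℝ^ℓ be a measurable and locally bounded function. Then F_f is the smallest cusco map Φ such that f(x) ∈ Φ(x) for Lebesgue-almost all x ∈ ℝ^d; that is, F_f is cusco, f(x) ∈ F_f(x) for almost all x, and if Φ : ℝ^d ⇒ ℝ^ℓ is any cusco map with f(x) ∈ Φ(x) for almost all x, then F_f(x) ⊆ Φ(x) for all x ∈ ℝ^d. -/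
open MeasureTheory Metric Filter Set Topology

noncomputable section

/-!
The sets `B_δ(x) \ N` with `N` null form a basis of the filter `𝓝 x ⊓ ae volume`, so `F_f(x)` is
the intersection of the closed convex hulls of `f '' S` over all `S` in that filter. Local
boundedness makes these hulls compact from some `S₀` on, so by Cantor's intersection theorem
`F_f(x)` is nonempty and compact, and every open set containing it contains a single hull
`clco (f '' (A ∩ B))` with `A` an open neighbourhood of `x`; as `A` is also a neighbourhood of
all nearby `y`, this is upper semicontinuity.

If `f x ∉ F_f(x)`, then for some basic open `V ∋ f x` the point `x` lies in `f⁻¹ V` but outside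
the support of `volume` restricted to `f⁻¹ V`; in a second countable space the complement of a
support is null, so this happens only on a null set.

For minimality, upper semicontinuity of `Φ` and `f ∈ Φ` a.e. put `f` into the convex set
`thickening ε (Φ x)` near `x` off a null set, so `F_f(x)` lies in its closure for every `ε > 0`.
-/

section Support

variable {X Y : Type*} [TopologicalSpace X] [MeasurableSpace X] [OpensMeasurableSpace X]
  {μ : Measure X}

theorem frequently_nhds_inf_ae_of_mem_support_restrict {s : Set X} {x : X}
    (hx : x ∈ (μ.restrict s).support) : ∃ᶠ a in 𝓝 x ⊓ ae μ, a ∈ s := by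
  refine frequently_iff.2 fun {S} hS => ?_
  obtain ⟨A, hA, B, hB, rfl⟩ := mem_inf_iff.1 hS
  obtain ⟨V, hVA, hVo, hxV⟩ := mem_nhds_iff.1 hA
  have hpos : 0 < μ (V ∩ s ∩ B) := by
    rw [measure_inter_conull hB, ← μ.restrict_apply hVo.measurableSet]
    exact (Measure.mem_support_iff_forall x).1 hx V (hVo.mem_nhds hxV)
  obtain ⟨a, ⟨haV, has⟩, haB⟩ := nonempty_of_measure_ne_zero hpos.ne'
  exact ⟨a, ⟨hVA haV, haB⟩, has⟩

theorem ae_mem_support_restrict [HereditarilyLindelofSpace X] (s : Set X) :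
    ∀ᵐ x ∂μ, x ∈ s → x ∈ (μ.restrict s).support := by
  refine ae_iff.2 <| measure_mono_null (fun x hx => ?_) <|
    (μ.restrict_apply Measure.isOpen_compl_support.measurableSet).symm.trans
      (Measure.measure_compl_support (μ := μ.restrict s))
  obtain ⟨hxs, hx⟩ := Classical.not_imp.1 hx
  exact ⟨hx, hxs⟩

theorem ae_mapClusterPt_nhds_inf_ae [HereditarilyLindelofSpace X] [TopologicalSpace Y]
    [SecondCountableTopology Y] (f : X → Y) :
    ∀ᵐ x ∂μ, MapClusterPt (f x) (𝓝 x ⊓ ae μ) f := by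
  obtain ⟨B, hBc, -, hB⟩ := TopologicalSpace.exists_countable_basis Y
  filter_upwards [(ae_ball_iff hBc).2 fun V _ => ae_mem_support_restrict (μ := μ) (f ⁻¹' V)]
    with x hx
  refine mapClusterPt_iff_frequently.2 fun W hW => ?_
  obtain ⟨V, hVB, hxV, hVW⟩ := hB.mem_nhds_iff.1 hW
  exact (frequently_nhds_inf_ae_of_mem_support_restrict (hx V hVB hxV)).mono fun a ha => hVW ha

end Support

section ClcoAlong

variable {X : Type*} {l : ℕ}

theorem isCompact_clco_of_isBounded {A : Set (Euc l)} (hA : Bornology.IsBounded A) :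
    IsCompact (clco A) :=
  (isBounded_convexHull.2 hA).isCompact_closure

theorem clco_mono {A B : Set (Euc l)} (h : A ⊆ B) : clco A ⊆ clco B :=
  closure_mono (convexHull_mono h)

def clcoAlong (L : Filter X) (f : X → Euc l) : Set (Euc l) :=
  ⋂ S ∈ L, clco (f '' S)

variable {L : Filter X} {f : X → Euc l}

theorem clcoAlong_subset {S : Set X} (hS : S ∈ L) : clcoAlong L f ⊆ clco (f '' S) :=
  biInter_subset_of_mem hS

theorem isClosed_clcoAlong : IsClosed (clcoAlong L f) :=
  isClosed_biInter fun _ _ => isClosed_closure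

theorem convex_clcoAlong : Convex ℝ (clcoAlong L f) :=
  convex_iInter₂ fun _ _ => (convex_convexHull ℝ _).closure

theorem MapClusterPt.mem_clcoAlong {y : Euc l} (h : MapClusterPt y L f) :
    y ∈ clcoAlong L f :=
  mem_iInter₂.2 fun _ hS =>
    closure_mono (subset_convexHull ℝ _) (h.mem_closure_of_mem _ (image_mem_map hS))

theorem clcoAlong_subset_closure {K : Set (Euc l)} (hK : Convex ℝ K) (h : ∀ᶠ a in L, f a ∈ K) :
    clcoAlong L f ⊆ closure K :=
  (clcoAlong_subset h).trans <| closure_mono <| convexHull_min (image_subset_iff.2 subset_rfl) hK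

theorem isCompact_clcoAlong {S₀ : Set X} (hS₀ : S₀ ∈ L) (hb : Bornology.IsBounded (f '' S₀)) :
    IsCompact (clcoAlong L f) :=
  (isCompact_clco_of_isBounded hb).of_isClosed_subset isClosed_clcoAlong (clcoAlong_subset hS₀)

/-- Cutting every `S ∈ L` down to a set `S₀ ∈ L` on which `f` is bounded turns the family of
hulls into one of compact sets without enlarging its intersection. -/
theorem directed_clco_image_inter (S₀ : Set X) :
    Directed (· ⊇ ·) fun S : L.sets => clco (f '' (S.1 ∩ S₀)) :=
  fun S T => ⟨⟨S.1 ∩ T.1, inter_mem S.2 T.2⟩,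
    clco_mono (image_mono (inter_subset_inter_left _ inter_subset_left)),
    clco_mono (image_mono (inter_subset_inter_left _ inter_subset_right))⟩

theorem iInter_clco_image_inter_subset (S₀ : Set X) :
    ⋂ S : L.sets, clco (f '' (S.1 ∩ S₀)) ⊆ clcoAlong L f :=
  subset_iInter₂ fun S hS =>
    (iInter_subset _ ⟨S, hS⟩).trans (clco_mono (image_mono inter_subset_left))

theorem nonempty_clcoAlong [L.NeBot] {S₀ : Set X} (hS₀ : S₀ ∈ L)
    (hb : Bornology.IsBounded (f '' S₀)) : (clcoAlong L f).Nonempty := by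
  have : Nonempty L.sets := ⟨⟨univ, univ_mem⟩⟩
  refine Nonempty.mono (iInter_clco_image_inter_subset S₀) <|
    IsCompact.nonempty_iInter_of_directed_nonempty_isCompact_isClosed _
      (directed_clco_image_inter S₀) (fun S => ?_) (fun S => ?_) fun _ => isClosed_closure
  · obtain ⟨a, ha⟩ := Filter.nonempty_of_mem (inter_mem S.2 hS₀)
    exact ⟨f a, subset_closure (subset_convexHull ℝ _ (mem_image_of_mem f ha))⟩
  · exact isCompact_clco_of_isBounded (hb.subset (image_mono inter_subset_right))

theorem exists_mem_clco_image_subset {S₀ : Set X} (hS₀ : S₀ ∈ L)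
    (hb : Bornology.IsBounded (f '' S₀)) {U : Set (Euc l)} (hU : IsOpen U)
    (h : clcoAlong L f ⊆ U) : ∃ S ∈ L, clco (f '' S) ⊆ U := by
  have : Nonempty L.sets := ⟨⟨univ, univ_mem⟩⟩
  obtain ⟨S, hS⟩ := exists_subset_nhds_of_isCompact (directed_clco_image_inter S₀)
    (fun S => isCompact_clco_of_isBounded (hb.subset (image_mono inter_subset_right)))
    fun y hy => hU.mem_nhds (h (iInter_clco_image_inter_subset S₀ hy))
  exact ⟨_, inter_mem S.2 hS₀, hS⟩

end ClcoAlong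

section NhdsInf

variable {X : Type*} [TopologicalSpace X] {l : ℕ} {M : Filter X} {f : X → Euc l} {x : X}

theorem upperHemicontinuousAt_clcoAlong_nhds_inf {S₀ : Set X} (hS₀ : S₀ ∈ 𝓝 x ⊓ M)
    (hb : Bornology.IsBounded (f '' S₀)) :
    UpperHemicontinuousAt (fun y => clcoAlong (𝓝 y ⊓ M) f) x := by
  refine .of_forall_isOpen fun U hU h => ?_
  obtain ⟨S, hS, hSU⟩ := exists_mem_clco_image_subset hS₀ hb hU h
  obtain ⟨A, hA, B, hB, rfl⟩ := mem_inf_iff.1 hS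
  filter_upwards [eventually_eventually_nhds.2 hA] with y hy
  exact (clcoAlong_subset (inter_mem_inf hy hB)).trans hSU

theorem clcoAlong_nhds_inf_subset {Φ : X → Set (Euc l)} (hΦ : UpperHemicontinuousAt Φ x)
    (hconv : Convex ℝ (Φ x)) (hclosed : IsClosed (Φ x)) (hf : ∀ᶠ a in M, f a ∈ Φ a) :
    clcoAlong (𝓝 x ⊓ M) f ⊆ Φ x := by
  rw [← hclosed.closure_eq, closure_eq_iInter_cthickening]
  refine subset_iInter₂ fun ε hε => ?_
  have hnear : ∀ᶠ a in 𝓝 x ⊓ M, f a ∈ thickening ε (Φ x) :=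
    ((hΦ.forall_isOpen _ isOpen_thickening (self_subset_thickening hε _)).filter_mono
      inf_le_left).and (hf.filter_mono inf_le_right) |>.mono fun a ha => ha.1 ha.2
  exact (clcoAlong_subset_closure (hconv.thickening ε) hnear).trans
    (closure_thickening_subset_cthickening ε _)

end NhdsInf

theorem nhds_inf_ae_neBot {X : Type*} [TopologicalSpace X] [MeasurableSpace X] (μ : Measure X)
    [μ.IsOpenPosMeasure] (x : X) : (𝓝 x ⊓ ae μ).NeBot :=
  inf_neBot_iff.2 fun _ hs _ ht => nonempty_of_measure_ne_zero <| by
    rw [measure_inter_conull ht]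
    exact (μ.measure_pos_of_mem_nhds hs).ne'

section Filippov

variable {d l : ℕ}

theorem isCusco_iff {Φ : Euc d → Set (Euc l)} :
    IsCusco Φ ↔ UpperHemicontinuous Φ ∧
      ∀ x, (Φ x).Nonempty ∧ IsCompact (Φ x) ∧ Convex ℝ (Φ x) := by
  simp only [IsCusco, upperHemicontinuous_iff_forall_isOpen, Metric.eventually_nhds_iff_ball]

theorem LocBdd.exists_isBounded_image {f : Euc d → Euc l} (hbdd : LocBdd f) (x : Euc d) :
    ∃ S ∈ 𝓝 x, Bornology.IsBounded (f '' S) := by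
  obtain ⟨δ, hδ, C, hC⟩ := hbdd x
  exact ⟨ball x δ, ball_mem_nhds x hδ, isBounded_iff_forall_norm_le.2
    ⟨C, forall_mem_image.2 hC⟩⟩

theorem filippovReg_eq_clcoAlong (f : Euc d → Euc l) (x : Euc d) :
    FilippovReg f x = clcoAlong (𝓝 x ⊓ ae volume) f := by
  refine subset_antisymm (subset_iInter₂ fun S hS => ?_) ?_
  · obtain ⟨A, hA, B, hB, rfl⟩ := mem_inf_iff.1 hS
    obtain ⟨δ, hδ, hδA⟩ := Metric.mem_nhds_iff.1 hA
    refine (iInter₂_subset Bᶜ hB).trans <| (iInter₂_subset δ hδ).trans <| clco_mono <|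
      image_mono fun y hy => ⟨hδA hy.1, not_not.1 hy.2⟩
  · refine subset_iInter₂ fun N hN => subset_iInter₂ fun δ hδ => clcoAlong_subset ?_
    exact inter_mem_inf (ball_mem_nhds x hδ) (compl_mem_ae_iff.2 hN)

theorem isCusco_filippovReg {f : Euc d → Euc l} (hbdd : LocBdd f) : IsCusco (FilippovReg f) := by
  rw [funext (filippovReg_eq_clcoAlong f), isCusco_iff]
  refine ⟨fun x => ?_, fun x => ?_⟩ <;> obtain ⟨S, hS, hSb⟩ := hbdd.exists_isBounded_image x
  · exact upperHemicontinuousAt_clcoAlong_nhds_inf (mem_inf_of_left hS) hSb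
  · have := nhds_inf_ae_neBot volume x
    exact ⟨nonempty_clcoAlong (mem_inf_of_left hS) hSb,
      isCompact_clcoAlong (mem_inf_of_left hS) hSb, convex_clcoAlong⟩

theorem ae_mem_filippovReg (f : Euc d → Euc l) : ∀ᵐ x, f x ∈ FilippovReg f x := by
  filter_upwards [ae_mapClusterPt_nhds_inf_ae f] with x hx
  rw [filippovReg_eq_clcoAlong]
  exact hx.mem_clcoAlong

theorem filippovReg_subset_of_isCusco {f : Euc d → Euc l} {Φ : Euc d → Set (Euc l)}
    (hΦ : IsCusco Φ) (hf : ∀ᵐ x, f x ∈ Φ x) (x : Euc d) : FilippovReg f x ⊆ Φ x := by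
  obtain ⟨husc, hvals⟩ := isCusco_iff.1 hΦ
  obtain ⟨-, hcompact, hconv⟩ := hvals x
  rw [filippovReg_eq_clcoAlong]
  exact clcoAlong_nhds_inf_subset (husc x) hconv hcompact.isClosed hf

end Filippov

theorem filippovReg_smallest_cusco_general (d l : ℕ) (f : Euc d → Euc l)
    (hbdd : LocBdd f) :
    IsCusco (FilippovReg f) ∧
    (∀ᵐ x : Euc d, f x ∈ FilippovReg f x) ∧
    (∀ Φ : Euc d → Set (Euc l), IsCusco Φ → (∀ᵐ x : Euc d, f x ∈ Φ x) →
      ∀ x : Euc d, FilippovReg f x ⊆ Φ x) :=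
  ⟨isCusco_filippovReg hbdd, ae_mem_filippovReg f,
    fun _ hΦ hf => filippovReg_subset_of_isCusco hΦ hf⟩

/-- Proposition (ii): `F_f` is the smallest cusco map containing `f(x)`
for almost all `x`. -/
theorem filippovReg_smallest_cusco (d l : ℕ) (f : Euc d → Euc l)
    (hmeas : Measurable f) (hbdd : LocBdd f) :
    IsCusco (FilippovReg f) ∧
    (∀ᵐ x : Euc d, f x ∈ FilippovReg f x) ∧
    (∀ Φ : Euc d → Set (Euc l), IsCusco Φ → (∀ᵐ x : Euc d, f x ∈ Φ x) →
      ∀ x : Euc d, FilippovReg f x ⊆ Φ x) :=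
  filippovReg_smallest_cusco_general d l f hbdd
end
end

section
/- Let Φ : ℝ^d ⇒ ℝ^ℓ be a cusco map. Then for every x ∈ ℝ^d, m(Φ)(x) = ⋂_{Φ' ∼ Φ} Φ'(x), where the intersection is taken over all cusco maps Φ' : ℝ^d ⇒ ℝ^ℓ that are equal to Φ Lebesgue-almost everywhere; consequently Φ(x) = ⋂_{Φ' ∼ Φ} Φ'(x) for Lebesgue-almost every x ∈ ℝ^d. -/
open MeasureTheory Metric Filter Set Topology

noncomputable section

/-! `m(Φ)` depends only on the almost-everywhere class of `Φ`, and upper semicontinuity of a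
cusco `Φ` gives `m(Φ) ⊆ Φ`; hence `m(Φ)` lies below every cusco map equivalent to `Φ`.
Conversely, `m(Φ)` is itself cusco, by a compactness argument over the directed family of hulls
`clco Φ(B_δ(x) \ N)`, and it agrees with `Φ` almost everywhere: if `z ∈ Φ(x)` avoids one of these
hulls, some set `V ∋ z` of a countable base misses it, so `x` lies in `{y | Φ(y) meets V}` while
that set is null near `x`; for each `V` such points form a null set. -/

theorem measure_sep_exists_nhds_inter_null {X : Type*} [TopologicalSpace X]
    [SecondCountableTopology X] [MeasurableSpace X] (μ : Measure X) (S : Set X) :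
    μ {x ∈ S | ∃ u ∈ 𝓝 x, μ (S ∩ u) = 0} = 0 :=
  measure_null_of_locally_null _ fun _ ⟨_, u, hu, hnull⟩ =>
    ⟨S ∩ u, mem_of_superset (inter_mem_nhdsWithin _ hu)
      (inter_subset_inter_left _ (sep_subset _ _)), hnull⟩

theorem nonempty_ball_sdiff_null {X : Type*} [PseudoMetricSpace X] [MeasurableSpace X]
    {μ : Measure X} [μ.IsOpenPosMeasure] {N : Set X} (hN : μ N = 0) (x : X) {δ : ℝ}
    (hδ : 0 < δ) : (ball x δ \ N).Nonempty :=
  nonempty_of_measure_ne_zero <| by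
    rw [measure_sdiff_null hN]
    exact (measure_ball_pos μ x hδ).ne'

section ClcoImage

variable {d l : ℕ}

def clcoImage (Φ : Euc d → Set (Euc l)) (s : Set (Euc d)) : Set (Euc l) :=
  clco (⋃ a ∈ s, Φ a)

variable (Φ : Euc d → Set (Euc l))

theorem isClosed_clcoImage (s : Set (Euc d)) : IsClosed (clcoImage Φ s) :=
  isClosed_closure

theorem convex_clcoImage (s : Set (Euc d)) : Convex ℝ (clcoImage Φ s) :=
  (convex_convexHull ℝ _).closure

theorem subset_clcoImage {s : Set (Euc d)} {a : Euc d} (ha : a ∈ s) : Φ a ⊆ clcoImage Φ s :=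
  (subset_biUnion_of_mem ha).trans ((subset_convexHull ℝ _).trans subset_closure)

variable {Φ}

theorem clcoImage_mono {s t : Set (Euc d)} (h : s ⊆ t) : clcoImage Φ s ⊆ clcoImage Φ t :=
  closure_mono (convexHull_mono (biUnion_subset_biUnion_left h))

theorem clcoImage_subset_closure {s : Set (Euc d)} {U : Set (Euc l)} (hU : Convex ℝ U)
    (h : ∀ a ∈ s, Φ a ⊆ U) : clcoImage Φ s ⊆ closure U :=
  closure_mono (convexHull_min (iUnion₂_subset h) hU)

theorem clcoImage_congr {Ψ : Euc d → Set (Euc l)} {s : Set (Euc d)} (h : ∀ a ∈ s, Φ a = Ψ a) :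
    clcoImage Φ s = clcoImage Ψ s := by
  rw [clcoImage, clcoImage, iUnion₂_congr h]

theorem isCompact_clcoImage {s : Set (Euc d)} {R : ℝ} (h : ∀ a ∈ s, Φ a ⊆ closedBall 0 R) :
    IsCompact (clcoImage Φ s) :=
  (isCompact_closedBall 0 R).of_isClosed_subset (isClosed_clcoImage Φ s) <| by
    simpa only [isClosed_closedBall.closure_eq] using
      clcoImage_subset_closure (convex_closedBall 0 R) h

end ClcoImage

section MPhi

variable {d l : ℕ} {Φ : Euc d → Set (Euc l)}

theorem mem_mPhi {x : Euc d} {z : Euc l} :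
    z ∈ mPhi Φ x ↔ ∀ N, volume N = 0 → ∀ δ, 0 < δ → z ∈ clcoImage Φ (ball x δ \ N) := by
  simp only [mPhi, clcoImage, mem_iInter]

theorem mPhi_subset_clcoImage_ball (x : Euc d) {δ : ℝ} (hδ : 0 < δ) :
    mPhi Φ x ⊆ clcoImage Φ (ball x δ) := fun _ hz => by
  simpa only [sdiff_empty] using mem_mPhi.1 hz ∅ measure_empty δ hδ

theorem isClosed_mPhi (x : Euc d) : IsClosed (mPhi Φ x) :=
  isClosed_iInter fun _ => isClosed_iInter fun _ => isClosed_iInter fun _ =>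
    isClosed_iInter fun _ => isClosed_clcoImage Φ _

theorem convex_mPhi (x : Euc d) : Convex ℝ (mPhi Φ x) :=
  convex_iInter fun _ => convex_iInter fun _ => convex_iInter fun _ =>
    convex_iInter fun _ => convex_clcoImage Φ _

theorem mPhi_subset_mPhi_of_ae_eq {Ψ : Euc d → Set (Euc l)} (h : ∀ᵐ y, Φ y = Ψ y) (x : Euc d) :
    mPhi Φ x ⊆ mPhi Ψ x := by
  intro z hz
  rw [mem_mPhi] at hz ⊢
  intro N hN δ hδ
  set E := {y | ¬Φ y = Ψ y}
  have hEq : clcoImage Φ (ball x δ \ (N ∪ E)) = clcoImage Ψ (ball x δ \ (N ∪ E)) :=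
    clcoImage_congr fun a ha => not_not.1 fun hne => ha.2 (Or.inr hne)
  have hz' := hz (N ∪ E) (measure_union_null hN (ae_iff.1 h)) δ hδ
  rw [hEq] at hz'
  exact clcoImage_mono (sdiff_subset_sdiff_right subset_union_left) hz'

theorem mPhi_congr_ae {Ψ : Euc d → Set (Euc l)} (h : ∀ᵐ y, Φ y = Ψ y) : mPhi Φ = mPhi Ψ :=
  funext fun x => (mPhi_subset_mPhi_of_ae_eq h x).antisymm
    (mPhi_subset_mPhi_of_ae_eq (h.mono fun _ => Eq.symm) x)

theorem mPhi_subset_self (hΦ : IsCusco Φ) (x : Euc d) : mPhi Φ x ⊆ Φ x := by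
  obtain ⟨-, hcpt, hconv⟩ := hΦ.2 x
  intro z hz
  rw [← hcpt.isClosed.closure_eq, closure_eq_iInter_cthickening]
  refine mem_iInter₂.2 fun ε hε => ?_
  obtain ⟨δ, hδ, hsub⟩ := hΦ.1 x _ isOpen_thickening (self_subset_thickening hε _)
  exact closure_thickening_subset_cthickening ε _ <|
    clcoImage_subset_closure (hconv.thickening ε) hsub (mPhi_subset_clcoImage_ball x hδ hz)

theorem ae_subset_mPhi (Φ : Euc d → Set (Euc l)) : ∀ᵐ x, Φ x ⊆ mPhi Φ x := by
  let meets : Set (Euc l) → Set (Euc d) := fun V => {x | (Φ x ∩ V).Nonempty}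
  let b := TopologicalSpace.countableBasis (Euc l)
  rw [ae_iff]
  refine measure_mono_null (t := ⋃ V ∈ b, {x ∈ meets V | ∃ u ∈ 𝓝 x, volume (meets V ∩ u) = 0})
    ?_ ((measure_biUnion_null_iff (TopologicalSpace.countable_countableBasis _)).2
      fun V _ => measure_sep_exists_nhds_inter_null volume (meets V))
  intro x hx
  obtain ⟨z, hzΦ, hz⟩ := not_subset.1 hx
  obtain ⟨N, hN, δ, hδ, hzK⟩ :
      ∃ N, volume N = 0 ∧ ∃ δ, 0 < δ ∧ z ∉ clcoImage Φ (ball x δ \ N) := by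
    simpa [mem_mPhi] using hz
  obtain ⟨V, hVb, hzV, hVK⟩ := (TopologicalSpace.isBasis_countableBasis _).exists_subset_of_mem_open
    hzK (isClosed_clcoImage _ _).isOpen_compl
  refine mem_biUnion hVb ⟨⟨z, hzΦ, hzV⟩, ball x δ, ball_mem_nhds x hδ, measure_mono_null ?_ hN⟩
  rintro y ⟨⟨w, hwΦ, hwV⟩, hy⟩
  by_contra hyN
  exact hVK hwV (subset_clcoImage Φ (s := ball x δ \ N) ⟨hy, hyN⟩ hwΦ)

theorem IsCusco.exists_isCompact_clcoImage_ball (hΦ : IsCusco Φ) (x : Euc d) :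
    ∃ δ > 0, IsCompact (clcoImage Φ (ball x δ)) := by
  obtain ⟨R, hR⟩ := (hΦ.2 x).2.1.isBounded.subset_ball (0 : Euc l)
  obtain ⟨δ, hδ, hsub⟩ := hΦ.1 x _ isOpen_ball hR
  exact ⟨δ, hδ, isCompact_clcoImage fun y hy => (hsub y hy).trans ball_subset_closedBall⟩

theorem IsCusco.exists_clcoImage_subset_of_mPhi_subset (hΦ : IsCusco Φ) {x : Euc d}
    {U : Set (Euc l)} (hU : IsOpen U) (h : mPhi Φ x ⊆ U) :
    ∃ N, volume N = 0 ∧ ∃ δ > 0, clcoImage Φ (ball x δ \ N) ⊆ U := by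
  obtain ⟨δ₀, hδ₀, hK⟩ := hΦ.exists_isCompact_clcoImage_ball x
  let ι := {p : Set (Euc d) × ℝ // volume p.1 = 0 ∧ 0 < p.2}
  have : Nonempty ι := ⟨⟨(∅, δ₀), measure_empty, hδ₀⟩⟩
  let t : ι → Set (Euc l) := fun p => clcoImage Φ (ball x p.1.2 \ p.1.1)
  have ht_dir : Directed (· ⊇ ·) t := fun p q =>
    ⟨⟨(p.1.1 ∪ q.1.1, min p.1.2 q.1.2), measure_union_null p.2.1 q.2.1, lt_min p.2.2 q.2.2⟩,
      clcoImage_mono (sdiff_subset_sdiff (ball_subset_ball (min_le_left _ _)) subset_union_left),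
      clcoImage_mono (sdiff_subset_sdiff (ball_subset_ball (min_le_right _ _)) subset_union_right)⟩
  have hdisj : (clcoImage Φ (ball x δ₀) ∩ Uᶜ) ∩ ⋂ p, t p = ∅ := by
    refine eq_empty_iff_forall_notMem.2 fun z ⟨⟨_, hzU⟩, hz⟩ => hzU (h ?_)
    exact mem_mPhi.2 fun N hN δ hδ => mem_iInter.1 hz ⟨(N, δ), hN, hδ⟩
  obtain ⟨p, hp⟩ := (hK.inter_right hU.isClosed_compl).elim_directed_family_closed t
    (fun p => isClosed_clcoImage _ _) hdisj ht_dir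
  refine ⟨p.1.1, p.2.1, min δ₀ p.1.2, lt_min hδ₀ p.2.2, fun z hz => by_contra fun hzU => ?_⟩
  have hz' : z ∈ (clcoImage Φ (ball x δ₀) ∩ Uᶜ) ∩ t p :=
    ⟨⟨clcoImage_mono (sdiff_subset.trans (ball_subset_ball (min_le_left _ _))) hz, hzU⟩,
      clcoImage_mono (sdiff_subset_sdiff_left (ball_subset_ball (min_le_right _ _))) hz⟩
  rwa [hp] at hz'

theorem IsCusco.mPhi (hΦ : IsCusco Φ) : IsCusco (mPhi Φ) := by
  refine ⟨fun x U hU hsub => ?_, fun x => ⟨?_, ?_, convex_mPhi x⟩⟩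
  · obtain ⟨N, hN, δ, hδ, hNU⟩ := hΦ.exists_clcoImage_subset_of_mPhi_subset hU hsub
    refine ⟨δ / 2, half_pos hδ, fun y hy z hz => hNU (clcoImage_mono ?_
      (mem_mPhi.1 hz N hN (δ / 2) (half_pos hδ)))⟩
    exact sdiff_subset_sdiff_left (ball_subset_ball' (by linarith [mem_ball.1 hy]))
  · by_contra hempty
    obtain ⟨N, hN, δ, hδ, hsub⟩ := hΦ.exists_clcoImage_subset_of_mPhi_subset isOpen_empty
      (not_nonempty_iff_eq_empty.1 hempty).subset
    obtain ⟨a, ha⟩ := nonempty_ball_sdiff_null hN x hδ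
    obtain ⟨w, hw⟩ := (hΦ.2 a).1
    exact hsub (subset_clcoImage Φ ha hw)
  · obtain ⟨δ, hδ, hK⟩ := hΦ.exists_isCompact_clcoImage_ball x
    exact hK.of_isClosed_subset (isClosed_mPhi x) (mPhi_subset_clcoImage_ball x hδ)

end MPhi

/-- Remark: `m(Φ)` is the intersection of all cusco maps equivalent to `Φ`,
and consequently `Φ` coincides almost everywhere with this intersection. -/
theorem mPhi_eq_iInter_equiv (d l : ℕ) (Φ : Euc d → Set (Euc l)) (hΦ : IsCusco Φ) :
    (∀ x : Euc d, mPhi Φ x =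
      ⋂ (Φ' : Euc d → Set (Euc l)) (_ : IsCusco Φ') (_ : ∀ᵐ y : Euc d, Φ' y = Φ y), Φ' x) ∧
    (∀ᵐ x : Euc d, Φ x =
      ⋂ (Φ' : Euc d → Set (Euc l)) (_ : IsCusco Φ') (_ : ∀ᵐ y : Euc d, Φ' y = Φ y), Φ' x) := by
  have hae : ∀ᵐ y, mPhi Φ y = Φ y := by
    filter_upwards [ae_subset_mPhi Φ] with y hy using (mPhi_subset_self hΦ y).antisymm hy
  have hmin : ∀ x, mPhi Φ x =
      ⋂ (Φ' : Euc d → Set (Euc l)) (_ : IsCusco Φ') (_ : ∀ᵐ y : Euc d, Φ' y = Φ y), Φ' x :=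
    fun x => (subset_iInter₂ fun Φ' hΦ' => subset_iInter fun h => by
        rw [← mPhi_congr_ae h]; exact mPhi_subset_self hΦ' x).antisymm
      (iInter_subset_of_subset (mPhi Φ) (iInter₂_subset hΦ.mPhi hae))
  refine ⟨hmin, ?_⟩
  filter_upwards [hae] with x hx
  rw [← hmin x, hx]
end
end
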